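/- Let n ≥ 2 and let X be a full-rank subgroup of the weight lattice Λ of Sp(2n) (type C_n). If ω_k ∈ X for every even k with 2 ≤ k ≤ n, and the family {α_i^∨|_X : 1 ≤ i ≤ n, i odd} of restrictions to X of the coroots with odd index is part of a ℤ-basis of the dual lattice X^* = Hom_ℤ(X, ℤ), then X = Λ. -/

import Mathlib

/-!
The coroots `α_i^∨` are the coordinate functionals of `Λ = ℤⁿ`, dual to the basis `ω_i`, and
`ω_k ∈ X` for even `k`. As the odd coroots restricted to `X` are part of a basis of `X^*` and `X`
is reflexive, for each odd `i` some `x ∈ X` has `⟨α_j^∨, x⟩ = δ_{ij}` for all odd `j`; then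
`x - ω_i` is a combination of the `ω_k` with `k` even, so `ω_i ∈ X` too.
-/

/-- The fundamental weights `ω_1, …, ω_n` of `Sp(2n)` (type `C_n`) in the weight
lattice `Λ = ℤⁿ`: `ω_j` is the `j`-th standard basis vector for `1 ≤ j ≤ n`, and by
convention `ω_0 = 0` (also `ω_j = 0` for `j > n`). -/
def w (n : ℕ) (j : ℕ) : Fin n → ℤ := fun i => if (i : ℕ) + 1 = j then 1 else 0

/-- The simple roots of `Sp(2n)` (type `C_n`): `α_i = 2ω_i − ω_{i−1} − ω_{i+1}` for
`1 ≤ i ≤ n−1` and `α_n = 2ω_n − 2ω_{n−1}`. -/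
def srootC (n : ℕ) (i : ℕ) : Fin n → ℤ :=
  if i = n then 2 • w n n - 2 • w n (n - 1)
  else 2 • w n i - w n (i - 1) - w n (i + 1)

/-- `σ_i = α_i + α_{i+1}` for `1 ≤ i ≤ n−1` (type `C_n`). -/
def sigC (n : ℕ) (i : ℕ) : Fin n → ℤ := srootC n i + srootC n (i + 1)

/-- A family of elements of a `ℤ`-module is *part of a basis* if it can be extended
to (i.e. realized injectively inside) a `ℤ`-basis. -/
def IsPartOfBasis {M : Type} [AddCommGroup M] [Module ℤ M] {ι : Type} (v : ι → M) : Prop :=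
  ∃ (κ : Type) (b : Module.Basis κ ℤ M) (f : ι → κ), Function.Injective f ∧ ∀ i, b (f i) = v i

/-- The family of restrictions to `X` of the coroots with odd index
`α_1^∨, α_3^∨, …`, where `α_i^∨` is the `i`-th coordinate functional on `Λ = ℤⁿ`
(i.e. `⟨α_i^∨, ω_j⟩ = δ_{ij}`), viewed as elements of `X^* = Hom_ℤ(X, ℤ)`.
The odd indices `1, 3, …` in `{1, …, n}` are enumerated by `j ↦ 2j+1`. -/
def oddCoroots (n : ℕ) (X : Submodule ℤ (Fin n → ℤ)) :
    Fin ((n + 1) / 2) → (X →ₗ[ℤ] ℤ) := fun j =>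
  (LinearMap.proj (R := ℤ) (φ := fun _ : Fin n => ℤ)
    ⟨2 * (j : ℕ), by have := j.isLt; omega⟩).domRestrict X

lemma w_succ (n : ℕ) (i : Fin n) : w n ((i : ℕ) + 1) = Pi.single i 1 := by
  funext i'
  simp [w, Pi.single_apply, Fin.ext_iff]

lemma Submodule.mem_of_single_mem_of_ne_zero {R ι : Type*} [Semiring R] [Fintype ι]
    [DecidableEq ι] {X : Submodule R (ι → R)} {x : ι → R}
    (h : ∀ k, x k ≠ 0 → Pi.single k 1 ∈ X) : x ∈ X := by
  rw [← Finset.univ_sum_single x]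
  refine X.sum_mem fun k _ => ?_
  by_cases hk : x k = 0
  · simp [hk]
  · simpa [← Pi.single_smul'] using X.smul_mem (x k) (h k hk)

lemma IsPartOfBasis.exists_dual {M ι : Type} [AddCommGroup M] [Module ℤ M]
    [Module.IsReflexive ℤ M] [DecidableEq ι] {v : ι → Module.Dual ℤ M} (hv : IsPartOfBasis v)
    (j : ι) : ∃ x : M, ∀ j', v j' x = (Pi.single j 1 : ι → ℤ) j' := by
  classical
  obtain ⟨κ, b, f, hf, hbf⟩ := hv
  refine ⟨(Module.evalEquiv ℤ M).symm (b.coord (f j)), fun j' => ?_⟩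
  rw [← hbf, Module.apply_evalEquiv_symm_apply, Module.Basis.coord_apply, b.repr_self,
    Finsupp.single_apply, Pi.single_apply]
  simp only [hf.eq_iff, eq_comm]

section

variable {n : ℕ} {X : Submodule ℤ (Fin n → ℤ)}

lemma single_mem_of_odd (hw : ∀ k : ℕ, 2 ≤ k → k ≤ n → Even k → w n k ∈ X) (i : Fin n)
    (hi : Odd (i : ℕ)) : Pi.single i 1 ∈ X := by
  obtain ⟨m, hm⟩ := hi
  rw [← w_succ]
  exact hw _ (by omega) (by omega) ⟨m + 1, by omega⟩

lemma single_mem_of_even (hw : ∀ k : ℕ, 2 ≤ k → k ≤ n → Even k → w n k ∈ X)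
    (hb : IsPartOfBasis (oddCoroots n X)) (i : Fin n) (hi : Even (i : ℕ)) :
    Pi.single i 1 ∈ X := by
  obtain ⟨m, hm⟩ := hi
  have hmn : m < (n + 1) / 2 := by omega
  obtain ⟨x, hx⟩ := hb.exists_dual ⟨m, hmn⟩
  -- Every odd coroot kills `x - ω_{i+1}`, so it is a combination of the `ω_k ∈ X` with `k` even.
  have hdiff : (x : Fin n → ℤ) - Pi.single i 1 ∈ X := by
    refine X.mem_of_single_mem_of_ne_zero fun k hk => ?_
    refine (Nat.even_or_odd (k : ℕ)).elim (fun ⟨m', hm'⟩ => absurd ?_ hk)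
      (single_mem_of_odd hw k)
    have hcoord := hx ⟨m', by omega⟩
    have hk' : (⟨2 * m', by omega⟩ : Fin n) = k := Fin.ext (by simp; omega)
    simp only [oddCoroots, LinearMap.domRestrict_apply, LinearMap.proj_apply, hk'] at hcoord
    simp only [Pi.sub_apply, hcoord, Pi.single_apply, Fin.ext_iff]
    split_ifs <;> omega
  simpa using X.sub_mem x.2 hdiff

end

theorem stmt18_general (n : ℕ) (X : Submodule ℤ (Fin n → ℤ))
    (hw : ∀ k : ℕ, 2 ≤ k → k ≤ n → Even k → w n k ∈ X)
    (hb : IsPartOfBasis (oddCoroots n X)) :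
    X = ⊤ := by
  refine eq_top_iff.2 fun x _ => X.mem_of_single_mem_of_ne_zero fun k _ => ?_
  exact (Nat.even_or_odd (k : ℕ)).elim (single_mem_of_even hw hb k) (single_mem_of_odd hw k)

/-- For `n ≥ 2` and a full-rank subgroup `X` of the weight lattice `Λ` of `Sp(2n)`
(type `C_n`): if `ω_k ∈ X` for every even `k` with `2 ≤ k ≤ n`, and the family
`{α_i^∨|_X : 1 ≤ i ≤ n, i odd}` is part of a `ℤ`-basis of `X^* = Hom_ℤ(X, ℤ)`,
then `X = Λ`. -/
theorem stmt18 (n : ℕ) (hn : 2 ≤ n) (X : Submodule ℤ (Fin n → ℤ))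
    (hrank : Module.finrank ℤ X = n)
    (hw : ∀ k : ℕ, 2 ≤ k → k ≤ n → Even k → w n k ∈ X)
    (hb : IsPartOfBasis (oddCoroots n X)) :
    X = ⊤ :=
  stmt18_general n X hw hb
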